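/- Let $a\in(-1,1)$, $\nu=(a-1)/2$, and define $h_1(z)=e^{-z/2}\sum_{k=0}^\infty \frac{(z/4)^{2k}}{k!\,\Gamma(k+\nu+1)}$ for $z>0$. Then $h_1$ satisfies the ODE $z h''(z)+(z+a)h'(z)+\frac a2 h(z)=0$ for all $z>0$. -/

import Mathlib

noncomputable section
open Real

/-- The solution `h₁(z) = e^{-z/2} ∑_{k≥0} (z/4)^{2k} / (k! Γ(k+ν+1))` with `ν = (a-1)/2`. -/
def h₁ (a z : ℝ) : ℝ :=
  Real.exp (-z / 2) *
    ∑' k : ℕ, (z / 4) ^ (2 * k) / ((Nat.factorial k : ℝ) * Real.Gamma ((k : ℝ) + (a - 1) / 2 + 1))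

/-! Write `ν = (a - 1) / 2` and `G(w) = ∑ wᵏ / (k! Γ(k + ν + 1))`, so that
`h₁(z) = e^{-z/2} G((z/4)²)`. The coefficients `c k` of `G` satisfy
`c k = (k + 1)(k + ν + 1) c (k + 1)`, which by the ratio test makes `G` entire and, read
coefficientwise, is the equation `w G'' + (ν + 1) G' = G`. The substitution `w = (z/4)²` turns it
into `z F'' + a F' = z F / 4` for `F(z) = G((z/4)²)`, and multiplying by `e^{-z/2}` removes
the `z F / 4` term in exchange for the `z h'` and `(a/2) h` terms of the equation for `h₁`. -/

open Filter Nat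

section PowerSeries

variable {𝕜 : Type*} [RCLike 𝕜]

def powerSeriesSum (c : ℕ → 𝕜) (x : 𝕜) : 𝕜 := ∑' k, c k * x ^ k

def derivCoeff (c : ℕ → 𝕜) (k : ℕ) : 𝕜 := (k + 1) * c (k + 1)

theorem summable_norm_mul_pow_of_eq_mul_succ {c q : ℕ → 𝕜} (hcq : ∀ k, c k = q k * c (k + 1))
    (hq : Tendsto (fun k => ‖q k‖) atTop atTop) (x : 𝕜) :
    Summable fun k => ‖c k * x ^ k‖ := by
  have key : ∀ᶠ k in atTop, ‖‖c (k + 1) * x ^ (k + 1)‖‖ ≤ 1 / 2 * ‖‖c k * x ^ k‖‖ := by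
    filter_upwards [hq.eventually_ge_atTop (2 * ‖x‖)] with k hk
    rw [hcq k]
    simp only [norm_norm, norm_mul, norm_pow, pow_succ]
    calc ‖c (k + 1)‖ * (‖x‖ ^ k * ‖x‖) = ‖c (k + 1)‖ * ‖x‖ ^ k * ‖x‖ := by ring
      _ ≤ ‖c (k + 1)‖ * ‖x‖ ^ k * (‖q k‖ / 2) := by gcongr; linarith
      _ = 1 / 2 * (‖q k‖ * ‖c (k + 1)‖ * ‖x‖ ^ k) := by ring
  exact summable_of_ratio_norm_eventually_le (by norm_num) key

theorem summable_norm_derivCoeff_mul_pow {c : ℕ → 𝕜}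
    (hc : ∀ x : 𝕜, Summable fun k => ‖c k * x ^ k‖) (x : 𝕜) :
    Summable fun k => ‖derivCoeff c k * x ^ k‖ := by
  set R : ℝ := 2 * (‖x‖ + 1)
  have hR : 1 ≤ R := by linarith [norm_nonneg x]
  refine ((summable_nat_add_iff 1).mpr (hc R)).of_nonneg_of_le (fun _ => norm_nonneg _) fun k => ?_
  have hk : ((k : ℝ) + 1) ≤ 2 ^ k := by exact_mod_cast Nat.lt_two_pow_self
  have hxR : ‖x‖ ^ k ≤ (‖x‖ + 1) ^ k := by gcongr; linarith
  simp only [derivCoeff, norm_mul, norm_pow, RCLike.norm_ofReal, abs_of_pos (by positivity : 0 < R)]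
  rw [← Nat.cast_succ, RCLike.norm_natCast, Nat.cast_succ]
  calc ((k : ℝ) + 1) * ‖c (k + 1)‖ * ‖x‖ ^ k = ‖c (k + 1)‖ * (((k : ℝ) + 1) * ‖x‖ ^ k) := by ring
    _ ≤ ‖c (k + 1)‖ * (2 ^ k * (‖x‖ + 1) ^ k) := by gcongr
    _ = ‖c (k + 1)‖ * R ^ k := by rw [← mul_pow]
    _ ≤ ‖c (k + 1)‖ * R ^ (k + 1) := by gcongr; omega

theorem hasSum_powerSeriesSum {c : ℕ → 𝕜} (hc : ∀ x : 𝕜, Summable fun k => ‖c k * x ^ k‖)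
    (x : 𝕜) : HasSum (fun k => c k * x ^ k) (powerSeriesSum c x) :=
  (hc x).of_norm.hasSum

theorem hasDerivAt_powerSeriesSum {c : ℕ → 𝕜} (hc : ∀ x : 𝕜, Summable fun k => ‖c k * x ^ k‖)
    (x : 𝕜) : HasDerivAt (powerSeriesSum c) (powerSeriesSum (derivCoeff c) x) x := by
  set R : ℝ := ‖x‖ + 1
  have hsplit : powerSeriesSum c = fun y => c 0 + ∑' k, c (k + 1) * y ^ (k + 1) := by
    funext y
    simpa [powerSeriesSum] using (hc y).of_norm.tsum_eq_zero_add
  have htail : HasDerivAt (fun y => ∑' k, c (k + 1) * y ^ (k + 1))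
      (∑' k, derivCoeff c k * x ^ k) x := by
    have hR : 0 < R := by positivity
    have h0 : Summable fun k => c (k + 1) * (0 : 𝕜) ^ (k + 1) := by simp
    refine hasDerivAt_tsum_of_isPreconnected (g' := fun k y => derivCoeff c k * y ^ k)
      (u := fun k => ‖derivCoeff c k * (R : 𝕜) ^ k‖) (y₀ := 0)
      (summable_norm_derivCoeff_mul_pow hc R) Metric.isOpen_ball (convex_ball 0 R).isPreconnected
      (fun k y _ => ?_) (fun k y hy => ?_) (Metric.mem_ball_self hR)
      h0 ?_
    · refine ((hasDerivAt_pow (k + 1) y).const_mul (c (k + 1))).congr_deriv ?_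
      rw [derivCoeff, Nat.add_sub_cancel, Nat.cast_succ]
      ring
    · rw [mem_ball_zero_iff] at hy
      simp only [norm_mul, norm_pow, RCLike.norm_ofReal, abs_of_pos hR]
      gcongr
    · rw [mem_ball_zero_iff]
      linarith
  rw [hsplit]
  exact htail.const_add (c 0)

theorem hasSum_natCast_mul_mul_pow {c : ℕ → 𝕜} (hc : ∀ x : 𝕜, Summable fun k => ‖c k * x ^ k‖)
    (x : 𝕜) : HasSum (fun k => k * c k * x ^ k) (x * powerSeriesSum (derivCoeff c) x) := by
  have h := (hasSum_powerSeriesSum (summable_norm_derivCoeff_mul_pow hc) x).mul_left x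
  rw [← hasSum_nat_add_iff' 1]
  simp only [Finset.sum_range_one, Nat.cast_zero, zero_mul, sub_zero]
  have e : ∀ k : ℕ, ((k + 1 : ℕ) : 𝕜) * c (k + 1) * x ^ (k + 1) = x * (derivCoeff c k * x ^ k) := by
    intro k
    simp only [derivCoeff]
    push_cast
    ring
  simpa only [e] using h

end PowerSeries

-- This holds at the poles too, where Mathlib's `Gamma` takes the value `0`.
theorem Real.one_div_Gamma_eq_self_mul_one_div_Gamma_add_one (s : ℝ) :
    (Gamma s)⁻¹ = s * (Gamma (s + 1))⁻¹ := by
  rcases ne_or_eq s 0 with (h | rfl)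
  · rw [Gamma_add_one h, mul_inv, mul_inv_cancel_left₀ h]
  · rw [zero_add, Gamma_zero, inv_zero, zero_mul]

-- `∑ besselCoeff ν k * wᵏ = w^{-ν/2} I_ν(2√w)`, with `I_ν` the modified Bessel function.
def besselCoeff (ν : ℝ) (k : ℕ) : ℝ := ((k ! : ℝ) * Gamma (k + ν + 1))⁻¹

theorem besselCoeff_eq_mul_succ (ν : ℝ) (k : ℕ) :
    besselCoeff ν k = ((k + 1) * (k + ν + 1)) * besselCoeff ν (k + 1) := by
  have hk : (k : ℝ) + 1 ≠ 0 := by positivity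
  simp only [besselCoeff, mul_inv, Nat.factorial_succ, Nat.cast_mul, Nat.cast_succ]
  rw [Real.one_div_Gamma_eq_self_mul_one_div_Gamma_add_one,
    show (k : ℝ) + 1 + ν + 1 = k + ν + 1 + 1 by ring]
  field_simp

theorem summable_norm_besselCoeff_mul_pow (ν x : ℝ) :
    Summable fun k => ‖besselCoeff ν k * x ^ k‖ := by
  have hk (b : ℝ) : Tendsto (fun k : ℕ => (k : ℝ) + b) atTop atTop :=
    tendsto_atTop_add_const_right _ _ tendsto_natCast_atTop_atTop
  have hkν : Tendsto (fun k : ℕ => (k : ℝ) + ν + 1) atTop atTop :=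
    tendsto_atTop_add_const_right _ _ (hk ν)
  exact summable_norm_mul_pow_of_eq_mul_succ (besselCoeff_eq_mul_succ ν)
    (tendsto_norm_atTop_atTop.comp ((hk 1).atTop_mul_atTop₀ hkν)) x

theorem powerSeriesSum_besselCoeff_ode (ν w : ℝ) :
    w * powerSeriesSum (derivCoeff (derivCoeff (besselCoeff ν))) w
      + (ν + 1) * powerSeriesSum (derivCoeff (besselCoeff ν)) w
      = powerSeriesSum (besselCoeff ν) w := by
  have hc := summable_norm_besselCoeff_mul_pow ν
  have hc' := summable_norm_derivCoeff_mul_pow hc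
  refine ((hasSum_natCast_mul_mul_pow hc' w).add
    ((hasSum_powerSeriesSum hc' w).mul_left (ν + 1))).unique ?_
  convert hasSum_powerSeriesSum hc w using 2 with k
  rw [besselCoeff_eq_mul_succ, derivCoeff]
  ring

theorem hasDerivAt_exp_neg_half_mul {F : ℝ → ℝ} {F' z : ℝ} (hF : HasDerivAt F F' z) :
    HasDerivAt (fun z => exp (-z / 2) * F z) (exp (-z / 2) * (F' - F z / 2)) z := by
  have he : HasDerivAt (fun z : ℝ => -z / 2) (-1 / 2) z := by
    simpa using (hasDerivAt_id z).neg.div_const 2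
  refine (he.exp.mul hF).congr_deriv ?_
  ring

theorem hasDerivAt_comp_sq_div_four {G : ℝ → ℝ} {G' z : ℝ} (hG : HasDerivAt G G' ((z / 4) ^ 2)) :
    HasDerivAt (fun z => G ((z / 4) ^ 2)) (z / 8 * G') z := by
  have hw : HasDerivAt (fun z : ℝ => (z / 4) ^ 2) (z / 8) z := by
    refine ((hasDerivAt_id z).div_const 4).pow 2 |>.congr_deriv ?_
    simp only [id]
    ring
  exact (hG.comp z hw).congr_deriv (mul_comm _ _)

theorem ode_exp_neg_half_mul {F F' F'' : ℝ → ℝ} (hF : ∀ z, HasDerivAt F (F' z) z)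
    (hF' : ∀ z, HasDerivAt F' (F'' z) z) {a z : ℝ}
    (hode : z * F'' z + a * F' z = z / 4 * F z) :
    z * deriv (deriv fun z => exp (-z / 2) * F z) z
      + (z + a) * deriv (fun z => exp (-z / 2) * F z) z + a / 2 * (exp (-z / 2) * F z) = 0 := by
  have h1 : deriv (fun z => exp (-z / 2) * F z) = fun z => exp (-z / 2) * (F' z - F z / 2) :=
    funext fun z => (hasDerivAt_exp_neg_half_mul (hF z)).deriv
  have h2 := hasDerivAt_exp_neg_half_mul ((hF' z).fun_sub ((hF z).div_const 2))
  rw [h1, h2.deriv]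
  linear_combination exp (-z / 2) * hode

theorem h₁_eq_exp_mul_powerSeriesSum (a : ℝ) :
    h₁ a = fun z => exp (-z / 2) * powerSeriesSum (besselCoeff ((a - 1) / 2)) ((z / 4) ^ 2) := by
  funext z
  simp only [h₁, powerSeriesSum, besselCoeff, ← pow_mul, div_eq_inv_mul]

theorem h₁_ode_general (a : ℝ) (z : ℝ) :
    z * deriv (deriv (h₁ a)) z + (z + a) * deriv (h₁ a) z + a / 2 * h₁ a z = 0 := by
  have hc := summable_norm_besselCoeff_mul_pow ((a - 1) / 2)
  have hG := hasDerivAt_powerSeriesSum hc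
  have hG' := hasDerivAt_powerSeriesSum (summable_norm_derivCoeff_mul_pow hc)
  have hF (z : ℝ) := hasDerivAt_comp_sq_div_four (hG ((z / 4) ^ 2))
  have hF' (z : ℝ) :=
    ((hasDerivAt_id' z).div_const 8).fun_mul (hasDerivAt_comp_sq_div_four (hG' ((z / 4) ^ 2)))
  rw [h₁_eq_exp_mul_powerSeriesSum]
  refine ode_exp_neg_half_mul hF hF' ?_
  linear_combination z / 4 * powerSeriesSum_besselCoeff_ode ((a - 1) / 2) ((z / 4) ^ 2)

/-- `h₁` satisfies the ODE `z h'' + (z+a) h' + (a/2) h = 0` for all `z > 0`. -/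
theorem h₁_ode (a : ℝ) (ha₁ : -1 < a) (ha₂ : a < 1) (z : ℝ) (hz : 0 < z) :
    z * deriv (deriv (h₁ a)) z + (z + a) * deriv (h₁ a) z + a / 2 * h₁ a z = 0 :=
  h₁_ode_general a z
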